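/- (Existence part of Proposition 2.) Let m ≠ 0 and λ be real constants and let A : ℝ → ℝ be any smooth, everywhere positive function. Consider on ℝ⁴ with coordinates (τ,x,y,z) the Bianchi V metric g_{V} with components g_ττ = −A(τ)²e^{mλτ}, g_xx = A(τ)²e^{mλτ}, g_yy = A(τ)²e^{m(λ−1)τ}e^{2x}, g_zz = A(τ)²e^{2x} (all off-diagonal components zero). Then the vector field L₁ with components (2/m, 0, y, λz) is a conformal Killing vector of g_{V} with conformal factor ψ(τ,x,y,z) = (2/m)·A'(τ)/A(τ) + λ. -/

import Mathlib

open Real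

/-- Partial derivative of a scalar function on `ℝⁿ` with respect to the `c`-th coordinate. -/
noncomputable def pd {n : ℕ} (f : (Fin n → ℝ) → ℝ) (c : Fin n) (p : Fin n → ℝ) : ℝ :=
  fderiv ℝ f p (Pi.single c 1)

lemma pd_const {n : ℕ} (r : ℝ) (c : Fin n) (p : Fin n → ℝ) : pd (fun _ => r) c p = 0 := by
  simp [pd]

lemma pd_comp {n : ℕ} (h : ℝ → ℝ) (i c : Fin n) (p : Fin n → ℝ)
    (hh : DifferentiableAt ℝ h (p i)) :
    pd (fun q => h (q i)) c p = if i = c then deriv h (p i) else 0 := by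
  have H : HasFDerivAt (fun q : Fin n → ℝ => h (q i))
      ((deriv h (p i)) • ContinuousLinearMap.proj (R := ℝ) (φ := fun _ : Fin n => ℝ) i) p :=
    hh.hasDerivAt.comp_hasFDerivAt p (hasFDerivAt_apply i p)
  rw [pd, H.fderiv]
  simp [Pi.single_apply]

lemma pd_coord {n : ℕ} (i c : Fin n) (p : Fin n → ℝ) :
    pd (fun q => q i) c p = if i = c then 1 else 0 := by
  have := pd_comp (fun t => t) i c p differentiableAt_id
  simpa using this

lemma pd_const_mul {n : ℕ} (r : ℝ) (f : (Fin n → ℝ) → ℝ) (c : Fin n) (p : Fin n → ℝ)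
    (hf : DifferentiableAt ℝ f p) :
    pd (fun q => r * f q) c p = r * pd f c p := by
  rw [pd, fderiv_const_mul hf]; rfl

lemma pd_neg {n : ℕ} (f : (Fin n → ℝ) → ℝ) (c : Fin n) (p : Fin n → ℝ) :
    pd (fun q => -f q) c p = -pd f c p := by
  rw [pd, fderiv_fun_neg]; rfl

lemma pd_mul {n : ℕ} (f g : (Fin n → ℝ) → ℝ) (c : Fin n) (p : Fin n → ℝ)
    (hf : DifferentiableAt ℝ f p) (hg : DifferentiableAt ℝ g p) :
    pd (fun q => f q * g q) c p = pd f c p * g p + f p * pd g c p := by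
  rw [pd, fderiv_fun_mul hf hg]
  simp [pd]; ring

/-- `X` is a conformal Killing vector of the metric `g` with conformal factor `ψ`:
for all indices `a b` and all points `p`,
`Σ_c [X^c ∂_c g_{ab} + g_{cb} ∂_a X^c + g_{ac} ∂_b X^c] = 2 ψ g_{ab}`. -/
def IsCKV {n : ℕ} (g : (Fin n → ℝ) → Matrix (Fin n) (Fin n) ℝ)
    (X : (Fin n → ℝ) → (Fin n → ℝ)) (ψ : (Fin n → ℝ) → ℝ) : Prop :=
  ∀ (a b : Fin n) (p : Fin n → ℝ),
    (∑ c, (X p c * pd (fun q => g q a b) c p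
      + g p c b * pd (fun q => X q c) a p
      + g p a c * pd (fun q => X q c) b p)) = 2 * ψ p * g p a b

set_option maxHeartbeats 1600000 in
/-- existence part of Proposition 2: for any smooth positive `A`,
`L₁ = (2/m, 0, y, λz)` is a CKV of the Bianchi V metric
`g = diag(−A²e^{mλτ}, A²e^{mλτ}, A²e^{m(λ−1)τ}e^{2x}, A²e^{2x})` with conformal factor
`ψ = (2/m)A'/A + λ`. -/
theorem L1_is_CKV_BianchiV (m lam : ℝ) (hm : m ≠ 0)
    (A : ℝ → ℝ) (hA : ContDiff ℝ (⊤ : ℕ∞) A) (hApos : ∀ t, 0 < A t) :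
    IsCKV
      (fun p : Fin 4 → ℝ =>
        Matrix.diagonal
          ![-((A (p 0)) ^ 2 * Real.exp (m * lam * p 0)),
            (A (p 0)) ^ 2 * Real.exp (m * lam * p 0),
            (A (p 0)) ^ 2 * Real.exp (m * (lam - 1) * p 0) * Real.exp (2 * p 1),
            (A (p 0)) ^ 2 * Real.exp (2 * p 1)])
      (fun p : Fin 4 → ℝ => ![2 / m, 0, p 2, lam * p 3])
      (fun p => (2 / m) * (deriv A (p 0) / A (p 0)) + lam) := by
  intro a b p
  have hAd : Differentiable ℝ A := hA.differentiable (by simp)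
  -- derivative facts
  have d1 : ∀ t, HasDerivAt (fun s => A s ^ 2 * Real.exp (m * lam * s))
      (2 * A t * deriv A t * Real.exp (m * lam * t)
        + A t ^ 2 * (m * lam * Real.exp (m * lam * t))) t := by
    intro t
    have h1 : HasDerivAt (fun s => A s ^ 2) (2 * A t * deriv A t) t := by
      simpa [mul_comm, mul_assoc] using (show HasDerivAt (fun s => A s ^ 2) _ t from (hAd t).hasDerivAt.pow 2)
    have h2 : HasDerivAt (fun s => Real.exp (m * lam * s))
        (m * lam * Real.exp (m * lam * t)) t := by
      simpa [mul_comm] using (((hasDerivAt_id t).const_mul (m * lam)).exp)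
    exact h1.mul h2
  have d2 : ∀ t, HasDerivAt (fun s => A s ^ 2 * Real.exp (m * (lam - 1) * s))
      (2 * A t * deriv A t * Real.exp (m * (lam - 1) * t)
        + A t ^ 2 * (m * (lam - 1) * Real.exp (m * (lam - 1) * t))) t := by
    intro t
    have h1 : HasDerivAt (fun s => A s ^ 2) (2 * A t * deriv A t) t := by
      simpa [mul_comm, mul_assoc] using (show HasDerivAt (fun s => A s ^ 2) _ t from (hAd t).hasDerivAt.pow 2)
    have h2 : HasDerivAt (fun s => Real.exp (m * (lam - 1) * s))
        (m * (lam - 1) * Real.exp (m * (lam - 1) * t)) t := by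
      simpa [mul_comm] using (((hasDerivAt_id t).const_mul (m * (lam - 1))).exp)
    exact h1.mul h2
  have d3 : ∀ t, HasDerivAt (fun s => A s ^ 2) (2 * A t * deriv A t) t := by
    intro t
    simpa [mul_comm, mul_assoc] using (show HasDerivAt (fun s => A s ^ 2) _ t from (hAd t).hasDerivAt.pow 2)
  have d4 : ∀ t, HasDerivAt (fun s => Real.exp (2 * s)) (2 * Real.exp (2 * t)) t := by
    intro t
    simpa [mul_comm] using (((hasDerivAt_id t).const_mul (2:ℝ)).exp)
  -- pd of metric components
  have hg0 : ∀ c, pd (fun q => A (q 0) ^ 2 * Real.exp (m * lam * q 0)) c p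
      = if (0 : Fin 4) = c then
          2 * A (p 0) * deriv A (p 0) * Real.exp (m * lam * p 0)
            + A (p 0) ^ 2 * (m * lam * Real.exp (m * lam * p 0)) else 0 := by
    intro c
    rw [show (fun q : Fin 4 → ℝ => A (q 0) ^ 2 * Real.exp (m * lam * q 0))
        = (fun q : Fin 4 → ℝ => (fun s => A s ^ 2 * Real.exp (m * lam * s)) (q 0)) from rfl,
      pd_comp _ 0 c p (d1 (p 0)).differentiableAt, (d1 (p 0)).deriv]
  have hg0n : ∀ c, pd (fun q => -(A (q 0) ^ 2 * Real.exp (m * lam * q 0))) c p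
      = -(if (0 : Fin 4) = c then
          2 * A (p 0) * deriv A (p 0) * Real.exp (m * lam * p 0)
            + A (p 0) ^ 2 * (m * lam * Real.exp (m * lam * p 0)) else 0) := by
    intro c
    rw [pd_neg, hg0]
  have hf2 : DifferentiableAt ℝ (fun q : Fin 4 → ℝ => A (q 0) ^ 2 * Real.exp (m * (lam - 1) * q 0)) p :=
    ((d2 (p 0)).differentiableAt.comp p (hasFDerivAt_apply (𝕜 := ℝ) 0 p).differentiableAt :)
  have hf3 : DifferentiableAt ℝ (fun q : Fin 4 → ℝ => A (q 0) ^ 2) p :=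
    ((d3 (p 0)).differentiableAt.comp p (hasFDerivAt_apply (𝕜 := ℝ) 0 p).differentiableAt :)
  have hf4 : DifferentiableAt ℝ (fun q : Fin 4 → ℝ => Real.exp (2 * q 1)) p :=
    ((d4 (p 1)).differentiableAt.comp p (hasFDerivAt_apply (𝕜 := ℝ) 1 p).differentiableAt :)
  have hg2a : ∀ c, pd (fun q => A (q 0) ^ 2 * Real.exp (m * (lam - 1) * q 0)) c p
      = if (0 : Fin 4) = c then
          2 * A (p 0) * deriv A (p 0) * Real.exp (m * (lam - 1) * p 0)
            + A (p 0) ^ 2 * (m * (lam - 1) * Real.exp (m * (lam - 1) * p 0)) else 0 := by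
    intro c
    rw [show (fun q : Fin 4 → ℝ => A (q 0) ^ 2 * Real.exp (m * (lam - 1) * q 0))
        = (fun q : Fin 4 → ℝ => (fun s => A s ^ 2 * Real.exp (m * (lam - 1) * s)) (q 0)) from rfl,
      pd_comp _ 0 c p (d2 (p 0)).differentiableAt, (d2 (p 0)).deriv]
  have hg3a : ∀ c, pd (fun q : Fin 4 → ℝ => A (q 0) ^ 2) c p
      = if (0 : Fin 4) = c then 2 * A (p 0) * deriv A (p 0) else 0 := by
    intro c
    rw [show (fun q : Fin 4 → ℝ => A (q 0) ^ 2)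
        = (fun q : Fin 4 → ℝ => (fun s => A s ^ 2) (q 0)) from rfl,
      pd_comp _ 0 c p (d3 (p 0)).differentiableAt, (d3 (p 0)).deriv]
  have hg4a : ∀ c, pd (fun q : Fin 4 → ℝ => Real.exp (2 * q 1)) c p
      = if (1 : Fin 4) = c then 2 * Real.exp (2 * p 1) else 0 := by
    intro c
    rw [show (fun q : Fin 4 → ℝ => Real.exp (2 * q 1))
        = (fun q : Fin 4 → ℝ => (fun s => Real.exp (2 * s)) (q 1)) from rfl,
      pd_comp _ 1 c p (d4 (p 1)).differentiableAt, (d4 (p 1)).deriv]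
  have hg2 : ∀ c, pd (fun q => A (q 0) ^ 2 * Real.exp (m * (lam - 1) * q 0) * Real.exp (2 * q 1)) c p
      = (if (0 : Fin 4) = c then
          2 * A (p 0) * deriv A (p 0) * Real.exp (m * (lam - 1) * p 0)
            + A (p 0) ^ 2 * (m * (lam - 1) * Real.exp (m * (lam - 1) * p 0)) else 0)
          * Real.exp (2 * p 1)
        + A (p 0) ^ 2 * Real.exp (m * (lam - 1) * p 0)
          * (if (1 : Fin 4) = c then 2 * Real.exp (2 * p 1) else 0) := by
    intro c
    rw [pd_mul _ _ c p hf2 hf4, hg2a, hg4a]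
  have hg3 : ∀ c, pd (fun q => A (q 0) ^ 2 * Real.exp (2 * q 1)) c p
      = (if (0 : Fin 4) = c then 2 * A (p 0) * deriv A (p 0) else 0) * Real.exp (2 * p 1)
        + A (p 0) ^ 2 * (if (1 : Fin 4) = c then 2 * Real.exp (2 * p 1) else 0) := by
    intro c
    rw [pd_mul _ _ c p hf3 hf4, hg3a, hg4a]
  -- pd of X components
  have hX2 : ∀ c, pd (fun q : Fin 4 → ℝ => q 2) c p = if (2 : Fin 4) = c then 1 else 0 :=
    fun c => pd_coord 2 c p
  have hX3 : ∀ c, pd (fun q : Fin 4 → ℝ => lam * q 3) c p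
      = lam * (if (3 : Fin 4) = c then 1 else 0) := by
    intro c
    rw [pd_const_mul lam _ c p (hasFDerivAt_apply 3 p).differentiableAt, pd_coord]
  have hAne : A (p 0) ≠ 0 := (hApos (p 0)).ne'
  fin_cases a <;> fin_cases b <;>
    simp only [Fin.sum_univ_four, Fin.isValue, Fin.zero_eta, Fin.mk_one, Fin.reduceFinMk, Matrix.diagonal_apply, Matrix.cons_val_zero,
      Matrix.cons_val_one, Matrix.head_cons, Matrix.cons_val_two, Matrix.tail_cons,
      Matrix.cons_val_three, Fin.reduceEq, if_true, if_false, ite_true, ite_false,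
      hg0n, hg2, hg3, hg3a, hX2, hX3, pd_const, hg0] <;>
    (try field_simp) <;> (try ring)
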